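/- arXiv:1103.4645 — 7 statements merged into one kernel-verified Lean document; each statement's English description precedes it below -/
import Mathlib

section
/- Let α and h be real numbers with h > 0, α > 0 and α h² < 4. Then the real 2×2 matrix A = [[1 − α h²/2, h], [α h (α h²/4 − 1), 1 − α h²/2]] has determinant 1, and its (complex) eigenvalues are λ± = ((2 − α h²) ± i h √(4α − α² h²))/2, each of which has complex absolute value exactly 1. -/
/-!
Writing `t = 2 - α h²` for the trace of `A` and `s = h √(4α - α² h²)`, one has `t² + s² = 4`.
Since `det A = 1`, the characteristic polynomial of `A` is `λ² - t λ + 1`, and any complex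
number `(t ± i s) / 2` with `t² + s² = 4` is a root of it of modulus one.
-/

open Matrix Complex

theorem Matrix.det_sub_smul_one_fin_two {R : Type*} [CommRing R]
    (A : Matrix (Fin 2) (Fin 2) R) (z : R) :
    (A - z • (1 : Matrix (Fin 2) (Fin 2) R)).det = z ^ 2 - A.trace * z + A.det := by
  simp only [det_fin_two, trace_fin_two, sub_apply, smul_apply, one_apply_eq, one_apply_ne,
    ne_eq, zero_ne_one, one_ne_zero, not_false_eq_true, smul_eq_mul, mul_one, mul_zero, sub_zero]
  ring

section UnitCircle

variable {t s : ℝ}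

theorem Complex.sq_sub_mul_add_one_eq_zero_of_sq_add_sq_eq_four (hts : t ^ 2 + s ^ 2 = 4) :
    (((t : ℂ) + I * s) / 2) ^ 2 - t * (((t : ℂ) + I * s) / 2) + 1 = 0 := by
  have hts' : (t : ℂ) ^ 2 + (s : ℂ) ^ 2 = 4 := by exact_mod_cast hts
  linear_combination ((s : ℂ) ^ 2 / 4) * I_sq - hts' / 4

theorem Complex.norm_eq_one_of_sq_add_sq_eq_four (hts : t ^ 2 + s ^ 2 = 4) :
    ‖((t : ℂ) + I * s) / 2‖ = 1 := by
  have hz : ((t : ℂ) + I * s) / 2 = ⟨t / 2, s / 2⟩ := by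
    apply Complex.ext <;> simp
  rw [hz, norm_def, normSq_mk, Real.sqrt_eq_one]
  linear_combination hts / 4

theorem Matrix.det_map_ofReal_sub_smul_one_eq_zero (A : Matrix (Fin 2) (Fin 2) ℝ)
    (hdet : A.det = 1) (htr : A.trace = t) (hts : t ^ 2 + s ^ 2 = 4) :
    (A.map ofReal - (((t : ℂ) + I * s) / 2) • (1 : Matrix (Fin 2) (Fin 2) ℂ)).det = 0 := by
  have hdet' : (A.map ofReal).det = 1 := by
    rw [show A.map ofReal = ofRealHom.mapMatrix A from rfl, ← RingHom.map_det, hdet, map_one]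
  have htr' : (A.map ofReal).trace = t := by
    rw [← htr, trace_fin_two, trace_fin_two]
    simp
  rw [det_sub_smul_one_fin_two, hdet', htr']
  exact sq_sub_mul_add_one_eq_zero_of_sq_add_sq_eq_four hts

end UnitCircle

theorem stmt_1_general (α h : ℝ) (hα : 0 < α) (h4 : α * h ^ 2 < 4) :
    let A : Matrix (Fin 2) (Fin 2) ℝ :=
      !![1 - α * h ^ 2 / 2, h; α * h * (α * h ^ 2 / 4 - 1), 1 - α * h ^ 2 / 2]
    let lamP : ℂ :=
      ((2 - (α : ℂ) * (h : ℂ) ^ 2) +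
        Complex.I * (h : ℂ) * (Real.sqrt (4 * α - α ^ 2 * h ^ 2) : ℂ)) / 2
    let lamM : ℂ :=
      ((2 - (α : ℂ) * (h : ℂ) ^ 2) -
        Complex.I * (h : ℂ) * (Real.sqrt (4 * α - α ^ 2 * h ^ 2) : ℂ)) / 2
    A.det = 1 ∧
      (A.map (Complex.ofReal) - lamP • (1 : Matrix (Fin 2) (Fin 2) ℂ)).det = 0 ∧
      (A.map (Complex.ofReal) - lamM • (1 : Matrix (Fin 2) (Fin 2) ℂ)).det = 0 ∧
      ‖lamP‖ = 1 ∧ ‖lamM‖ = 1 := by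
  intro A lamP lamM
  set t := 2 - α * h ^ 2
  set s := h * Real.sqrt (4 * α - α ^ 2 * h ^ 2)
  have hdet : A.det = 1 := by
    rw [det_fin_two_of]
    ring
  have htr : A.trace = t := by
    rw [trace_fin_two_of]
    ring
  have hts : t ^ 2 + s ^ 2 = 4 := by
    rw [mul_pow, Real.sq_sqrt (by nlinarith)]
    ring
  have hts' : t ^ 2 + (-s) ^ 2 = 4 := by rwa [neg_sq]
  have hP : lamP = ((t : ℂ) + I * s) / 2 := by
    simp only [lamP, t, s]
    push_cast
    ring
  have hM : lamM = ((t : ℂ) + I * ↑(-s)) / 2 := by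
    simp only [lamM, t, s]
    push_cast
    ring
  rw [hP, hM]
  exact ⟨hdet, det_map_ofReal_sub_smul_one_eq_zero A hdet htr hts,
    det_map_ofReal_sub_smul_one_eq_zero A hdet htr hts',
    norm_eq_one_of_sq_add_sq_eq_four hts, norm_eq_one_of_sq_add_sq_eq_four hts'⟩

/-- For `h > 0`, `α > 0` with `α h² < 4`, the one-step update matrix
`A = [[1 − α h²/2, h], [α h (α h²/4 − 1), 1 − α h²/2]]` has determinant 1, and its
complex eigenvalues `λ± = ((2 − α h²) ± i h √(4α − α² h²))/2` (i.e. the roots of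
`det(A − λ I) = 0`) both have complex absolute value exactly 1. -/
theorem stmt_1 (α h : ℝ) (hh : 0 < h) (hα : 0 < α) (h4 : α * h ^ 2 < 4) :
    let A : Matrix (Fin 2) (Fin 2) ℝ :=
      !![1 - α * h ^ 2 / 2, h; α * h * (α * h ^ 2 / 4 - 1), 1 - α * h ^ 2 / 2]
    let lamP : ℂ :=
      ((2 - (α : ℂ) * (h : ℂ) ^ 2) +
        Complex.I * (h : ℂ) * (Real.sqrt (4 * α - α ^ 2 * h ^ 2) : ℂ)) / 2
    let lamM : ℂ :=
      ((2 - (α : ℂ) * (h : ℂ) ^ 2) -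
        Complex.I * (h : ℂ) * (Real.sqrt (4 * α - α ^ 2 * h ^ 2) : ℂ)) / 2
    A.det = 1 ∧
      (A.map (Complex.ofReal) - lamP • (1 : Matrix (Fin 2) (Fin 2) ℂ)).det = 0 ∧
      (A.map (Complex.ofReal) - lamM • (1 : Matrix (Fin 2) (Fin 2) ℂ)).det = 0 ∧
      ‖lamP‖ = 1 ∧ ‖lamM‖ = 1 :=
  stmt_1_general α h hα h4
end

section
/- Let M, K, h, β be real numbers with M > 0, K > 0, h > 0 and β arbitrary, and set α := K/(M + K β h²) (assuming M + K β h² ≠ 0). If real sequences (x_k), (v_k), (a_k) satisfy x_{k+1} = x_k + h v_k + ½ h² a_k, v_{k+1} = v_k + ½ h (a_k + a_{k+1}), and M a_k = −K x_k − K β h² a_k for all k, then for all k the vector (x_{k+1}, v_{k+1}) equals A (x_k, v_k), where A is the 2×2 matrix [[1 − α h²/2, h], [α h (α h²/4 − 1), 1 − α h²/2]]. -/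
open Matrix

/-! Solving the implicit equation for the acceleration gives the linear force law `a_k = -α x_k`.
With a linear force both updates are linear in `(x_k, v_k)`; substituting `x_{k+1}` into
`a_{k+1} = -α x_{k+1}` in the velocity update produces the entries of the second row. -/

lemma accel_eq_neg_mul_of_implicit {M K β h x a : ℝ} (hne : M + K * β * h ^ 2 ≠ 0)
    (ha : M * a = -K * x - K * β * h ^ 2 * a) : a = -(K / (M + K * β * h ^ 2)) * x := by
  have hsolved : (M + K * β * h ^ 2) * a = -K * x := by linear_combination ha
  field_simp
  linear_combination hsolved

lemma verlet_step_eq_mulVec_of_linear_force {α h x v x' v' : ℝ}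
    (hx : x' = x + h * v + (1 / 2) * h ^ 2 * (-α * x))
    (hv : v' = v + (1 / 2) * h * (-α * x + -α * x')) :
    ![x', v'] = !![1 - α * h ^ 2 / 2, h; α * h * (α * h ^ 2 / 4 - 1), 1 - α * h ^ 2 / 2] *ᵥ
      ![x, v] := by
  rw [mulVec_fin_two]
  refine vec2_eq ?_ ?_
  · change x' = (1 - α * h ^ 2 / 2) * x + h * v
    linear_combination hx
  · change v' = α * h * (α * h ^ 2 / 4 - 1) * x + (1 - α * h ^ 2 / 2) * v
    linear_combination hv - (1 / 2 * h * α) * hx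

theorem stmt_2_general (M K h β : ℝ)
    (hne : M + K * β * h ^ 2 ≠ 0)
    (x v a : ℕ → ℝ)
    (hx : ∀ k, x (k + 1) = x k + h * v k + (1 / 2) * h ^ 2 * a k)
    (hv : ∀ k, v (k + 1) = v k + (1 / 2) * h * (a k + a (k + 1)))
    (ha : ∀ k, M * a k = -K * x k - K * β * h ^ 2 * a k) :
    let α : ℝ := K / (M + K * β * h ^ 2)
    let A : Matrix (Fin 2) (Fin 2) ℝ :=
      !![1 - α * h ^ 2 / 2, h; α * h * (α * h ^ 2 / 4 - 1), 1 - α * h ^ 2 / 2]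
    ∀ k, ![x (k + 1), v (k + 1)] = A.mulVec ![x k, v k] := by
  intro α A k
  have haccel : ∀ j, a j = -α * x j := fun j => accel_eq_neg_mul_of_implicit hne (ha j)
  apply verlet_step_eq_mulVec_of_linear_force
  · rw [hx, haccel]
  · rw [hv, haccel, haccel]

/-- For the SyLiPN recursion applied to the scalar quadratic potential
`V(x) = ½ K x²` with mass `M`, timestep `h` and parameter `β` (with `M + K β h² ≠ 0`),
the one-step update `(x_k, v_k) ↦ (x_{k+1}, v_{k+1})` is given by the matrix
`A = [[1 − α h²/2, h], [α h (α h²/4 − 1), 1 − α h²/2]]` with `α = K/(M + K β h²)`. -/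
theorem stmt_2 (M K h β : ℝ) (hM : 0 < M) (hK : 0 < K) (hh : 0 < h)
    (hne : M + K * β * h ^ 2 ≠ 0)
    (x v a : ℕ → ℝ)
    (hx : ∀ k, x (k + 1) = x k + h * v k + (1 / 2) * h ^ 2 * a k)
    (hv : ∀ k, v (k + 1) = v k + (1 / 2) * h * (a k + a (k + 1)))
    (ha : ∀ k, M * a k = -K * x k - K * β * h ^ 2 * a k) :
    let α : ℝ := K / (M + K * β * h ^ 2)
    let A : Matrix (Fin 2) (Fin 2) ℝ :=
      !![1 - α * h ^ 2 / 2, h; α * h * (α * h ^ 2 / 4 - 1), 1 - α * h ^ 2 / 2]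
    ∀ k, ![x (k + 1), v (k + 1)] = A.mulVec ![x k, v k] :=
  stmt_2_general M K h β hne x v a hx hv ha
end

section
/- Let M, K, h be positive real numbers and let β ≥ 1/4. Then every pair of real sequences (x_k), (v_k) satisfying the SyLiPN recursion x_{k+1} = x_k + h v_k + ½ h² a_k, v_{k+1} = v_k + ½ h (a_k + a_{k+1}), M a_k = −K x_k − K β h² a_k is bounded: there exists a constant C (depending on x_0, v_0, M, K, h, β) such that |x_k| + |v_k| ≤ C for all k. -/
/-!
Solving the implicit equation for the acceleration turns SyLiPN on `V(x) = ½ K x²` into velocity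
Verlet for the linear force `a = -c x` with `c = K / (M + K β h²)`. Velocity Verlet conserves the
shadow energy `v² + c (1 - c h² / 4) x²` exactly, and `β ≥ 1/4` gives `c h² < 4`, so this energy
is a positive definite quadratic form in `(x, v)`; its level sets are bounded.
-/

noncomputable def verletEnergy (c h x v : ℝ) : ℝ :=
  v ^ 2 + c * (1 - c * h ^ 2 / 4) * x ^ 2

section VelocityVerlet

variable {c h : ℝ} {x v a : ℕ → ℝ}

theorem verletEnergy_succ (hx : ∀ k, x (k + 1) = x k + h * v k + (1 / 2) * h ^ 2 * a k)
    (hv : ∀ k, v (k + 1) = v k + (1 / 2) * h * (a k + a (k + 1)))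
    (ha : ∀ k, a k = -c * x k) (k : ℕ) :
    verletEnergy c h (x (k + 1)) (v (k + 1)) = verletEnergy c h (x k) (v k) := by
  rw [verletEnergy, verletEnergy, hv, ha, ha, hx, ha]
  ring

theorem verletEnergy_conserved (hx : ∀ k, x (k + 1) = x k + h * v k + (1 / 2) * h ^ 2 * a k)
    (hv : ∀ k, v (k + 1) = v k + (1 / 2) * h * (a k + a (k + 1)))
    (ha : ∀ k, a k = -c * x k) (k : ℕ) :
    verletEnergy c h (x k) (v k) = verletEnergy c h (x 0) (v 0) := by
  induction k with
  | zero => rfl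
  | succ k ih => rw [verletEnergy_succ hx hv ha, ih]

end VelocityVerlet

theorem abs_add_abs_le_of_sq_add_mul_sq {α x v : ℝ} (hα : 0 < α) :
    |x| + |v| ≤ √((v ^ 2 + α * x ^ 2) / α) + √(v ^ 2 + α * x ^ 2) := by
  have hx : x ^ 2 ≤ (v ^ 2 + α * x ^ 2) / α := by
    rw [le_div_iff₀ hα]
    nlinarith [sq_nonneg v]
  have hv : v ^ 2 ≤ v ^ 2 + α * x ^ 2 := by
    nlinarith [sq_nonneg x]
  exact add_le_add (Real.abs_le_sqrt hx) (Real.abs_le_sqrt hv)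

section SyLiPN

variable {M K β h : ℝ}

theorem sylipn_accel_eq {x a : ℝ} (hD : M + K * β * h ^ 2 ≠ 0)
    (ha : M * a = -K * x - K * β * h ^ 2 * a) :
    a = -(K / (M + K * β * h ^ 2)) * x := by
  field_simp
  linarith

theorem sylipn_denom_pos (hM : 0 < M) (hK : 0 ≤ K) (hβ : 0 ≤ β) : 0 < M + K * β * h ^ 2 := by
  positivity

theorem sylipn_stiffness_mul_sq_lt_four (hM : 0 < M) (hK : 0 ≤ K) (hβ : 1 / 4 ≤ β) :
    K / (M + K * β * h ^ 2) * h ^ 2 < 4 := by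
  rw [div_mul_eq_mul_div, div_lt_iff₀ (sylipn_denom_pos hM hK (by linarith))]
  nlinarith [mul_nonneg hK (sq_nonneg h)]

end SyLiPN

theorem stmt_3_general (M K h β : ℝ) (hM : 0 < M) (hK : 0 < K)
    (hβ : β ≥ 1 / 4)
    (x v a : ℕ → ℝ)
    (hx : ∀ k, x (k + 1) = x k + h * v k + (1 / 2) * h ^ 2 * a k)
    (hv : ∀ k, v (k + 1) = v k + (1 / 2) * h * (a k + a (k + 1)))
    (ha : ∀ k, M * a k = -K * x k - K * β * h ^ 2 * a k) :
    ∃ C : ℝ, ∀ k, |x k| + |v k| ≤ C := by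
  have hD : 0 < M + K * β * h ^ 2 := sylipn_denom_pos hM hK.le (by linarith)
  set c := K / (M + K * β * h ^ 2)
  have hc : 0 < c := div_pos hK hD
  have hch : c * h ^ 2 < 4 := sylipn_stiffness_mul_sq_lt_four hM hK.le hβ
  have hα : 0 < c * (1 - c * h ^ 2 / 4) := mul_pos hc (by linarith)
  have hac : ∀ k, a k = -c * x k := fun k => sylipn_accel_eq hD.ne' (ha k)
  refine ⟨√(verletEnergy c h (x 0) (v 0) / (c * (1 - c * h ^ 2 / 4))) +
    √(verletEnergy c h (x 0) (v 0)), fun k => ?_⟩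
  rw [← verletEnergy_conserved hx hv hac k]
  exact abs_add_abs_le_of_sq_add_mul_sq hα

/-- Linear unconditional stability of SyLiPN in the scalar case.
For positive `M`, `K`, `h` and `β ≥ 1/4`, every trajectory of the SyLiPN recursion
applied to `V(x) = ½ K x²` is bounded. -/
theorem stmt_3 (M K h β : ℝ) (hM : 0 < M) (hK : 0 < K) (hh : 0 < h)
    (hβ : β ≥ 1 / 4)
    (x v a : ℕ → ℝ)
    (hx : ∀ k, x (k + 1) = x k + h * v k + (1 / 2) * h ^ 2 * a k)
    (hv : ∀ k, v (k + 1) = v k + (1 / 2) * h * (a k + a (k + 1)))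
    (ha : ∀ k, M * a k = -K * x k - K * β * h ^ 2 * a k) :
    ∃ C : ℝ, ∀ k, |x k| + |v k| ≤ C :=
  stmt_3_general M K h β hM hK hβ x v a hx hv ha
end

section
/- Let M and K be n×n real symmetric positive definite matrices, let h > 0 and β ≥ 1/4. Then every pair of sequences (x_k), (v_k) in ℝⁿ satisfying the SyLiPN recursion x_{k+1} = x_k + h v_k + ½ h² a_k, v_{k+1} = v_k + ½ h (a_k + a_{k+1}), where a_k = −(M + β h² K)⁻¹ K x_k (the matrix M + β h² K being invertible since it is positive definite), is bounded: there exists a constant C such that ‖x_k‖ + ‖v_k‖ ≤ C for all k. In other words, SyLiPN is linearly unconditionally stable for β ≥ 1/4. -/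
/-!
With `y = x + β h² a` the defining relation of the acceleration becomes `M a = -K y`, and the
scheme is Newmark's method with `γ = 1/2` in the variable `y`. For such a step the quadratic
energy `v ⬝ Mv + y ⬝ Ky + (β - 1/4) h² a ⬝ Ma` is exactly conserved: its increment is a sum of
products `(u' + u) ⬝ A(u' - u)` that cancel once `K(y' + y) = -M(a' + a)` is used. For `β ≥ 1/4`
all three terms are nonnegative, so `v` and `y` stay in bounded sublevel sets of the positive
definite forms of `M` and `K`, and `x = M⁻¹(M + β h² K) y` is bounded as well.
-/

open Matrix

namespace Matrix

variable {ι : Type*} [Fintype ι]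

theorem IsSymm.dotProduct_mulVec_comm {A : Matrix ι ι ℝ} (hA : A.IsSymm) (u w : ι → ℝ) :
    u ⬝ᵥ A *ᵥ w = w ⬝ᵥ A *ᵥ u := by
  rw [dotProduct_mulVec, ← mulVec_transpose, hA.eq, dotProduct_comm]

theorem IsSymm.dotProduct_mulVec_sub {A : Matrix ι ι ℝ} (hA : A.IsSymm) (u w : ι → ℝ) :
    u ⬝ᵥ A *ᵥ u - w ⬝ᵥ A *ᵥ w = (u + w) ⬝ᵥ A *ᵥ (u - w) := by
  simp only [mulVec_sub, dotProduct_sub, add_dotProduct, hA.dotProduct_mulVec_comm w u]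
  ring

theorem PosDef.exists_pos_mul_sq_norm_le {A : Matrix ι ι ℝ} (hA : A.PosDef) :
    ∃ c, 0 < c ∧ ∀ x : ι → ℝ, c * ‖x‖ ^ 2 ≤ x ⬝ᵥ A *ᵥ x := by
  rcases isEmpty_or_nonempty ι with hι | hι
  · exact ⟨1, one_pos, fun x => by simp [Subsingleton.elim x 0]⟩
  have hcont : Continuous fun x : ι → ℝ => x ⬝ᵥ A *ᵥ x := by fun_prop
  obtain ⟨u, hu, hmin⟩ := (isCompact_sphere (0 : ι → ℝ) 1).exists_isMinOn
    (NormedSpace.sphere_nonempty.mpr zero_le_one) hcont.continuousOn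
  refine ⟨u ⬝ᵥ A *ᵥ u, hA.dotProduct_mulVec_pos (ne_zero_of_mem_unit_sphere ⟨u, hu⟩),
    fun x => ?_⟩
  rcases eq_or_ne x 0 with rfl | hx
  · simp
  have hx' : 0 < ‖x‖ := norm_pos_iff.mpr hx
  have hmin_x : u ⬝ᵥ A *ᵥ u ≤ (‖x‖⁻¹ • x) ⬝ᵥ A *ᵥ (‖x‖⁻¹ • x) :=
    hmin (by simp [norm_smul, hx'.ne'])
  simp only [mulVec_smul, dotProduct_smul, smul_dotProduct, smul_eq_mul] at hmin_x
  calc (u ⬝ᵥ A *ᵥ u) * ‖x‖ ^ 2 ≤ ‖x‖⁻¹ * (‖x‖⁻¹ * (x ⬝ᵥ A *ᵥ x)) * ‖x‖ ^ 2 := by gcongr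
    _ = x ⬝ᵥ A *ᵥ x := by field_simp

theorem PosDef.exists_norm_le_of_dotProduct_mulVec_le {A : Matrix ι ι ℝ} (hA : A.PosDef)
    (E : ℝ) : ∃ R, ∀ x : ι → ℝ, x ⬝ᵥ A *ᵥ x ≤ E → ‖x‖ ≤ R := by
  obtain ⟨c, hc, hcA⟩ := hA.exists_pos_mul_sq_norm_le
  refine ⟨√(E / c), fun x hx => Real.le_sqrt_of_sq_le ?_⟩
  rw [le_div_iff₀' hc]
  exact (hcA x).trans hx

end Matrix

section NewmarkEnergy

variable {ι : Type*} [Fintype ι] (M K : Matrix ι ι ℝ) (c : ℝ)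

def newmarkEnergy (y v a : ι → ℝ) : ℝ :=
  v ⬝ᵥ M *ᵥ v + y ⬝ᵥ K *ᵥ y + c * (a ⬝ᵥ M *ᵥ a)

variable {M K c}

theorem newmarkEnergy_eq_of_step (hM : M.IsSymm) (hK : K.IsSymm) {h : ℝ}
    {y v a y' v' a' : ι → ℝ} (hMa : M *ᵥ a = -(K *ᵥ y)) (hMa' : M *ᵥ a' = -(K *ᵥ y'))
    (hv : v' = v + (h / 2) • (a + a')) (hy : y' = y + (h / 2) • (v + v') + c • (a' - a)) :
    newmarkEnergy M K c y' v' a' = newmarkEnergy M K c y v a := by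
  have hΔv : v' - v = (h / 2) • (a' + a) := by rw [hv]; module
  have hΔy : y' - y = (h / 2) • (v' + v) + c • (a' - a) := by rw [hy]; module
  have hKy : K *ᵥ (y' + y) = -(M *ᵥ (a' + a)) := by
    rw [mulVec_add, mulVec_add, hMa, hMa']
    abel
  rw [← sub_eq_zero]
  calc newmarkEnergy M K c y' v' a' - newmarkEnergy M K c y v a
      = (v' + v) ⬝ᵥ M *ᵥ (v' - v) + (y' - y) ⬝ᵥ K *ᵥ (y' + y)
          + c * ((a' + a) ⬝ᵥ M *ᵥ (a' - a)) := by
        rw [← hM.dotProduct_mulVec_sub, hK.dotProduct_mulVec_comm, ← hK.dotProduct_mulVec_sub,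
          ← hM.dotProduct_mulVec_sub]
        unfold newmarkEnergy
        ring
    _ = 0 := by
        rw [hΔv, hKy, hΔy, dotProduct_neg, add_dotProduct ((h / 2) • (v' + v)), smul_dotProduct,
          smul_dotProduct, mulVec_smul, dotProduct_smul, hM.dotProduct_mulVec_comm (a' - a)]
        simp only [smul_eq_mul]
        ring

theorem dotProduct_mulVec_le_newmarkEnergy (hM : M.PosSemidef) (hK : K.PosSemidef) (hc : 0 ≤ c)
    (y v a : ι → ℝ) :
    v ⬝ᵥ M *ᵥ v ≤ newmarkEnergy M K c y v a ∧ y ⬝ᵥ K *ᵥ y ≤ newmarkEnergy M K c y v a := by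
  have hv_nonneg : 0 ≤ v ⬝ᵥ M *ᵥ v := by simpa using hM.dotProduct_mulVec_nonneg v
  have hy_nonneg : 0 ≤ y ⬝ᵥ K *ᵥ y := by simpa using hK.dotProduct_mulVec_nonneg y
  have ha_nonneg : 0 ≤ c * (a ⬝ᵥ M *ᵥ a) :=
    mul_nonneg hc (by simpa using hM.dotProduct_mulVec_nonneg a)
  unfold newmarkEnergy
  constructor <;> linarith

end NewmarkEnergy

namespace SyLiPN

theorem predictor_step {E : Type*} [AddCommGroup E] [Module ℝ E] {h β : ℝ}
    {x v a x' v' a' : E} (hx : x' = x + h • v + ((1 : ℝ) / 2 * h ^ 2) • a)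
    (hv : v' = v + (h / 2) • (a + a')) :
    x' + (β * h ^ 2) • a' =
      x + (β * h ^ 2) • a + (h / 2) • (v + v') + ((β - 1 / 4) * h ^ 2) • (a' - a) := by
  rw [hx, hv]
  module

variable {ι : Type*} [Fintype ι] [DecidableEq ι] {M K : Matrix ι ι ℝ} {b : ℝ} {x a : ι → ℝ}

theorem mulVec_accel (hS : IsUnit (M + b • K).det) (ha : a = -((M + b • K)⁻¹ *ᵥ K *ᵥ x)) :
    M *ᵥ a = -(K *ᵥ (x + b • a)) := by
  have hSa : (M + b • K) *ᵥ a = -(K *ᵥ x) := by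
    rw [ha, mulVec_neg, mulVec_mulVec, mul_nonsing_inv _ hS, one_mulVec]
  rw [add_mulVec, smul_mulVec] at hSa
  rw [mulVec_add, mulVec_smul]
  linear_combination (norm := module) hSa

theorem eq_mulVec_predictor (hM : IsUnit M.det) (hMa : M *ᵥ a = -(K *ᵥ (x + b • a))) :
    x = (M⁻¹ * (M + b • K)) *ᵥ (x + b • a) := by
  have hMx : M *ᵥ x = (M + b • K) *ᵥ (x + b • a) := by
    simp only [add_mulVec, mulVec_add, smul_mulVec, mulVec_smul] at hMa ⊢
    linear_combination (norm := module) (-b) • hMa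
  rw [← mulVec_mulVec, ← hMx, mulVec_mulVec, nonsing_inv_mul _ hM, one_mulVec]

end SyLiPN

open scoped Matrix.Norms.Operator in
theorem stmt_4_general (n : ℕ) (M K : Matrix (Fin n) (Fin n) ℝ)
    (hM : M.PosDef) (hK : K.PosDef) (h β : ℝ) (hβ : β ≥ 1 / 4)
    (x v a : ℕ → (Fin n → ℝ))
    (hx : ∀ k, x (k + 1) = x k + h • v k + ((1 : ℝ) / 2 * h ^ 2) • a k)
    (hv : ∀ k, v (k + 1) = v k + (h / 2) • (a k + a (k + 1)))
    (ha : ∀ k, a k = -((M + (β * h ^ 2) • K)⁻¹.mulVec (K.mulVec (x k)))) :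
    ∃ C : ℝ, ∀ k, ‖x k‖ + ‖v k‖ ≤ C := by
  have hS : IsUnit (M + (β * h ^ 2) • K).det := (isUnit_iff_isUnit_det _).mp
    (hM.add_posSemidef (hK.posSemidef.smul (mul_nonneg (by linarith) (sq_nonneg h)))).isUnit
  set y : ℕ → Fin n → ℝ := fun k => x k + (β * h ^ 2) • a k
  have hMa k : M *ᵥ a k = -(K *ᵥ y k) := SyLiPN.mulVec_accel hS (ha k)
  have hc : 0 ≤ (β - 1 / 4) * h ^ 2 := mul_nonneg (by linarith) (sq_nonneg h)
  set c := (β - 1 / 4) * h ^ 2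
  set E := newmarkEnergy M K c (y 0) (v 0) (a 0)
  have hE k : newmarkEnergy M K c (y k) (v k) (a k) = E := by
    induction k with
    | zero => rfl
    | succ k ih =>
      rw [← ih]
      exact newmarkEnergy_eq_of_step (isHermitian_iff_isSymm.mp hM.isHermitian)
        (isHermitian_iff_isSymm.mp hK.isHermitian) (hMa k) (hMa (k + 1)) (hv k)
        (SyLiPN.predictor_step (hx k) (hv k))
  have hparts k :=
    dotProduct_mulVec_le_newmarkEnergy hM.posSemidef hK.posSemidef hc (y k) (v k) (a k)
  obtain ⟨Rv, hRv⟩ := hM.exists_norm_le_of_dotProduct_mulVec_le E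
  obtain ⟨Ry, hRy⟩ := hK.exists_norm_le_of_dotProduct_mulVec_le E
  refine ⟨‖M⁻¹ * (M + (β * h ^ 2) • K)‖ * Ry + Rv, fun k => add_le_add ?_ ?_⟩
  · rw [SyLiPN.eq_mulVec_predictor ((isUnit_iff_isUnit_det M).mp hM.isUnit) (hMa k)]
    exact (linfty_opNorm_mulVec _ _).trans
      (by gcongr; exact hRy _ ((hparts k).2.trans (hE k).le))
  · exact hRv _ ((hparts k).1.trans (hE k).le)

/-- Linear unconditional stability of SyLiPN in `ℝⁿ`.
For `n × n` real symmetric positive definite matrices `M`, `K`, timestep `h > 0`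
and `β ≥ 1/4`, every trajectory of the SyLiPN recursion
`x_{k+1} = x_k + h v_k + ½ h² a_k`, `v_{k+1} = v_k + ½ h (a_k + a_{k+1})`,
`a_k = −(M + β h² K)⁻¹ K x_k` is bounded. -/
theorem stmt_4 (n : ℕ) (M K : Matrix (Fin n) (Fin n) ℝ)
    (hM : M.PosDef) (hK : K.PosDef) (h β : ℝ) (hh : 0 < h) (hβ : β ≥ 1 / 4)
    (x v a : ℕ → (Fin n → ℝ))
    (hx : ∀ k, x (k + 1) = x k + h • v k + ((1 : ℝ) / 2 * h ^ 2) • a k)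
    (hv : ∀ k, v (k + 1) = v k + (h / 2) • (a k + a (k + 1)))
    (ha : ∀ k, a k = -((M + (β * h ^ 2) • K)⁻¹.mulVec (K.mulVec (x k)))) :
    ∃ C : ℝ, ∀ k, ‖x k‖ + ‖v k‖ ≤ C :=
  stmt_4_general n M K hM hK h β hβ x v a hx hv ha
end

section
/- Let V : ℝⁿ → ℝ be three times continuously differentiable and let f : ℝⁿ → Mₙ(ℝ) be a continuous matrix-valued function. Let x₀, v₀ ∈ ℝⁿ and let q be a solution of q''(t) = −∇V(q(t)) on a neighborhood of 0 with q(0) = x₀ and q'(0) = v₀. For h > 0 small enough that the matrices appearing below are invertible, define a₀(h) = −(I + h² f(x₀))⁻¹ ∇V(x₀), x₁(h) = x₀ + h v₀ + ½ h² a₀(h), a₁(h) = −(I + h² f(x₁(h)))⁻¹ ∇V(x₁(h)), and v₁(h) = v₀ + ½ h (a₀(h) + a₁(h)). Then there exist constants C > 0 and h₀ > 0 such that for all h ∈ (0, h₀], ‖q(h) − x₁(h)‖ ≤ C h³ and ‖q'(h) − v₁(h)‖ ≤ C h³; i.e., the integrator has a third-order local error. -/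
/-!
The step is velocity Verlet with accelerations perturbed by `O(h²)`: once `I + h² f(x₀)` is
invertible, `a₀ + ∇V(x₀) = h² (I + h² f(x₀))⁻¹ f(x₀) ∇V(x₀)`, and likewise for `a₁`, where the
factor after `h²` stays bounded because `I + h² f` tends to `I`. For the exact solution,
`x₀ + h v₀ - h²/2 ∇V(x₀)` is the second-order Taylor polynomial of `q` and
`v₀ - h/2 (∇V(x₀) + ∇V(q h))` is the trapezoidal rule for `q' h = v₀ + ∫ q''`; both are
`O(h³)`-accurate because `q` is `C⁴`. The perturbation moves the position by `O(h⁴)`, and,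
`∇V` being locally Lipschitz, replacing `∇V(q h)` by `∇V(x₁)` costs `h · O(h³)`. Each bound
`O(hᵏ⁺¹)` is obtained from an `O(hᵏ)` bound on a derivative by the mean value inequality.
-/

open Asymptotics Filter Matrix Topology

theorem contDiff_of_apply_eq_fderiv_single {ι : Type*} [Fintype ι] [DecidableEq ι]
    {V : (ι → ℝ) → ℝ} {G : (ι → ℝ) → ι → ℝ} {m n : WithTop ℕ∞} (hV : ContDiff ℝ n V)
    (hmn : m + 1 ≤ n) (hG : ∀ y i, G y i = fderiv ℝ V y (Pi.single i 1)) : ContDiff ℝ m G := by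
  obtain rfl : G = fun y i => fderiv ℝ V y (Pi.single i 1) := funext₂ hG
  exact contDiff_pi.mpr fun i => (hV.fderiv_right hmn).clm_apply contDiff_const

section OneAddSqSmul

variable {ι : Type*} [DecidableEq ι] {F : ℝ → Matrix ι ι ℝ}

theorem continuousAt_one_add_sq_smul (hF : ContinuousAt F 0) :
    ContinuousAt (fun h : ℝ => 1 + h ^ 2 • F h) 0 := by
  fun_prop

variable [Fintype ι]

theorem neg_inv_one_add_smul_mulVec_add {A : Matrix ι ι ℝ} {t : ℝ} (hu : IsUnit (1 + t • A))
    (v : ι → ℝ) : -((1 + t • A)⁻¹ *ᵥ v) + v = t • ((1 + t • A)⁻¹ *ᵥ (A *ᵥ v)) := by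
  have hinv : (1 + t • A)⁻¹ *ᵥ ((1 + t • A) *ᵥ v) = v := by
    rw [mulVec_mulVec, nonsing_inv_mul _ ((isUnit_iff_isUnit_det _).mp hu), one_mulVec]
  calc -((1 + t • A)⁻¹ *ᵥ v) + v = (1 + t • A)⁻¹ *ᵥ ((1 + t • A) *ᵥ v - v) := by
        rw [mulVec_sub, hinv]; abel
    _ = t • ((1 + t • A)⁻¹ *ᵥ (A *ᵥ v)) := by
        rw [add_mulVec, one_mulVec, add_sub_cancel_left, smul_mulVec, mulVec_smul]

theorem eventually_isUnit_one_add_sq_smul (hF : ContinuousAt F 0) :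
    ∀ᶠ h in 𝓝 0, IsUnit (1 + h ^ 2 • F h) := by
  have hdet : ContinuousAt (fun h : ℝ => (1 + h ^ 2 • F h).det) 0 :=
    (continuous_id.matrix_det.continuousAt).comp (continuousAt_one_add_sq_smul hF)
  filter_upwards [hdet.eventually_ne (by simp : (1 + (0 : ℝ) ^ 2 • F 0).det ≠ 0)] with h hh
  exact (isUnit_iff_isUnit_det _).mpr hh.isUnit

theorem continuousAt_inv_one_add_sq_smul (hF : ContinuousAt F 0) :
    ContinuousAt (fun h : ℝ => (1 + h ^ 2 • F h)⁻¹) 0 := by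
  refine (continuousAt_matrix_inv _ ?_).comp (continuousAt_one_add_sq_smul hF)
  simp [Ring.inverse_eq_inv']

theorem isBigO_neg_inv_one_add_sq_smul_mulVec_add (hF : ContinuousAt F 0)
    {v : ℝ → ι → ℝ} (hv : ContinuousAt v 0) :
    (fun h => -((1 + h ^ 2 • F h)⁻¹ *ᵥ v h) + v h) =O[𝓝 0] (· ^ 2) := by
  have hr : ContinuousAt (fun h => (1 + h ^ 2 • F h)⁻¹ *ᵥ (F h *ᵥ v h)) 0 := by
    have := continuousAt_inv_one_add_sq_smul hF
    fun_prop
  refine ((isBigO_refl (fun h : ℝ => h ^ 2) _).smul (hr.tendsto.isBigO_one ℝ)).congr'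
    ?_ (.of_eq (by simp))
  filter_upwards [eventually_isUnit_one_add_sq_smul hF] with h hu
  exact (neg_inv_one_add_smul_mulVec_add hu _).symm

end OneAddSqSmul

variable {E : Type*} [NormedAddCommGroup E] [NormedSpace ℝ E]

theorem isBigO_pow_succ_of_hasDerivAt {u u' : ℝ → E} {m : ℕ}
    (hu : ∀ᶠ s in 𝓝 0, HasDerivAt u (u' s) s) (hu0 : u 0 = 0)
    (hu' : u' =O[𝓝 0] (· ^ m)) : u =O[𝓝 0] (· ^ (m + 1)) := by
  obtain ⟨C, hC, hbound⟩ := hu'.exists_pos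
  obtain ⟨ε, hε, hball⟩ := Metric.eventually_nhds_iff_ball.mp (hu.and hbound.bound)
  refine IsBigO.of_bound C (Metric.eventually_nhds_iff_ball.mpr ⟨ε, hε, fun s hs => ?_⟩)
  have hsub : Metric.closedBall 0 ‖s‖ ⊆ Metric.ball (0 : ℝ) ε :=
    Metric.closedBall_subset_ball (mem_ball_zero_iff.mp hs)
  have hmvt : ‖u s - u 0‖ ≤ C * ‖s‖ ^ m * ‖s - 0‖ :=
    (convex_closedBall (0 : ℝ) ‖s‖).norm_image_sub_le_of_norm_hasDerivWithin_le
      (fun t ht => (hball t (hsub ht)).1.hasDerivWithinAt)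
      (fun t ht => (hball t (hsub ht)).2.trans <| by
        rw [norm_pow]
        gcongr
        simpa using ht)
      (Metric.mem_closedBall_self (norm_nonneg s)) (by simp)
  simpa [hu0, norm_pow, pow_succ, mul_assoc] using hmvt

theorem isBigO_pow_div_two_smul {u : ℝ → E} {k m : ℕ} (hu : u =O[𝓝 0] (· ^ m)) :
    (fun h => (h ^ k / 2) • u h) =O[𝓝 0] (· ^ (k + m)) :=
  (((isBigO_refl (fun h : ℝ => h ^ k) _).const_mul_left (1 / 2)).smul hu).congr
    (fun h => by ring_nf) (fun h => by simp [pow_add])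

section ThirdDerivative

variable {u u₁ u₂ u₃ : ℝ → E}
  (h₀ : ∀ᶠ s in 𝓝 0, HasDerivAt u (u₁ s) s) (h₁ : ∀ᶠ s in 𝓝 0, HasDerivAt u₁ (u₂ s) s)
  (h₂ : ∀ᶠ s in 𝓝 0, HasDerivAt u₂ (u₃ s) s) (h₃ : u₃ =O[𝓝 0] (fun _ => (1 : ℝ)))
include h₀ h₁ h₂ h₃

theorem isBigO_taylor_two_remainder :
    (fun s => u s - u 0 - s • u₁ 0 - (s ^ 2 / 2) • u₂ 0) =O[𝓝 0] (· ^ 3) := by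
  have e₂ : (fun s => u₂ s - u₂ 0) =O[𝓝 0] (· ^ 1) :=
    isBigO_pow_succ_of_hasDerivAt (h₂.mono fun s hs => hs.sub_const _) (sub_self _)
      (by simpa using h₃)
  have e₁ : (fun s => u₁ s - u₁ 0 - s • u₂ 0) =O[𝓝 0] (· ^ 2) := by
    refine isBigO_pow_succ_of_hasDerivAt (h₁.mono fun s hs => ?_) (by simp) e₂
    simpa using (hs.sub_const _).fun_sub ((hasDerivAt_id' s).smul_const (u₂ 0))
  refine isBigO_pow_succ_of_hasDerivAt (h₀.mono fun s hs => ?_) (by simp) e₁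
  convert ((hs.sub_const _).fun_sub ((hasDerivAt_id' s).smul_const (u₁ 0))).fun_sub
    (((hasDerivAt_pow 2 s).div_const 2).smul_const (u₂ 0)) using 1
  simp

theorem isBigO_trapezoid_error :
    (fun s => u s - u 0 - (s / 2) • (u₁ 0 + u₁ s)) =O[𝓝 0] (· ^ 3) := by
  have e₂ : (fun s => -((s / 2) • u₃ s)) =O[𝓝 0] (· ^ 1) :=
    (((isBigO_refl (fun s : ℝ => s) _).const_mul_left (1 / 2)).smul h₃).neg_left.congr
      (fun s => by ring_nf) (fun s => by simp)
  have e₁ : (fun s => (1 / 2 : ℝ) • (u₁ s - u₁ 0) - (s / 2) • u₂ s) =O[𝓝 0] (· ^ 2) := by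
    refine isBigO_pow_succ_of_hasDerivAt ((h₁.and h₂).mono fun s hs => ?_) (by simp) e₂
    convert ((hs.1.sub_const (u₁ 0)).fun_const_smul (1 / 2 : ℝ)).fun_sub
      (((hasDerivAt_id' s).div_const 2).fun_smul hs.2) using 1
    module
  refine isBigO_pow_succ_of_hasDerivAt ((h₀.and h₁).mono fun s hs => ?_) (by simp) e₁
  convert (hs.1.sub_const (u 0)).fun_sub
    (((hasDerivAt_id' s).div_const 2).fun_smul ((hasDerivAt_const s (u₁ 0)).fun_add hs.2)) using 1
  module

end ThirdDerivative

section NewtonSolution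

variable {g : E → E} {q q' : ℝ → E}

variable (hg : ContDiff ℝ 2 g) (hq : ∀ᶠ t in 𝓝 0, HasDerivAt q (q' t) t)
  (hq' : ∀ᶠ t in 𝓝 0, HasDerivAt q' (-g (q t)) t)
include hg hq hq'

theorem isBigO_taylor_two_remainder_of_newton :
    (fun t => q t - q 0 - t • q' 0 - (t ^ 2 / 2) • -g (q 0)) =O[𝓝 0] (· ^ 3) := by
  have hq₃ : ContinuousAt (fun t => -fderiv ℝ g (q t) (q' t)) 0 :=
    (((hg.continuous_fderiv two_ne_zero).continuousAt.comp
      hq.self_of_nhds.continuousAt).clm_apply hq'.self_of_nhds.continuousAt).neg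
  exact isBigO_taylor_two_remainder hq hq'
    (hq.mono fun t ht => ((hg.differentiable two_ne_zero _).hasFDerivAt.comp_hasDerivAt t ht).neg)
    (hq₃.tendsto.isBigO_one ℝ)

theorem isBigO_trapezoid_error_of_newton :
    (fun t => q' t - q' 0 - (t / 2) • (-g (q 0) + -g (q t))) =O[𝓝 0] (· ^ 3) := by
  have hqc : ContinuousAt q 0 := hq.self_of_nhds.continuousAt
  have hq'c : ContinuousAt q' 0 := hq'.self_of_nhds.continuousAt
  have hg1 : ContDiff ℝ 1 (fderiv ℝ g) := hg.fderiv_right le_rfl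
  have hq₄ : ContinuousAt
      (fun t => -(fderiv ℝ (fderiv ℝ g) (q t) (q' t) (q' t) + fderiv ℝ g (q t) (-g (q t)))) 0 :=
    (((((hg1.continuous_fderiv one_ne_zero).continuousAt.comp hqc).clm_apply hq'c).clm_apply
      hq'c).add ((hg1.continuous.continuousAt.comp hqc).clm_apply
        (hg.continuous.continuousAt.comp hqc).neg)).neg
  exact isBigO_trapezoid_error hq'
    (hq.mono fun t ht => ((hg.differentiable two_ne_zero _).hasFDerivAt.comp_hasDerivAt t ht).neg)
    ((hq.and hq').mono fun t ht =>
      (((hg1.differentiable one_ne_zero _).hasFDerivAt.comp_hasDerivAt t ht.1).clm_apply ht.2).neg)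
    (hq₄.tendsto.isBigO_one ℝ)

theorem isBigO_verlet_position_error {a₀ : ℝ → E}
    (ha₀ : (fun h => a₀ h + g (q 0)) =O[𝓝 0] (· ^ 2)) :
    (fun h => q h - (q 0 + h • q' 0 + (h ^ 2 / 2) • a₀ h)) =O[𝓝 0] (· ^ 3) := by
  have hcorr : (fun h : ℝ => (h ^ 2 / 2) • (a₀ h + g (q 0))) =O[𝓝 0] (· ^ 3) :=
    (isBigO_pow_div_two_smul (k := 2) ha₀).trans (isLittleO_pow_pow (by norm_num)).isBigO
  refine ((isBigO_taylor_two_remainder_of_newton hg hq hq').sub hcorr).congr_left fun h => ?_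
  module

theorem isBigO_verlet_velocity_error {a₀ a₁ : ℝ → E}
    (ha₀ : (fun h => a₀ h + g (q 0)) =O[𝓝 0] (· ^ 2))
    (ha₁ : (fun h => a₁ h + g (q 0 + h • q' 0 + (h ^ 2 / 2) • a₀ h)) =O[𝓝 0] (· ^ 2)) :
    (fun h => q' h - (q' 0 + (h / 2) • (a₀ h + a₁ h))) =O[𝓝 0] (· ^ 3) := by
  set x₁ := fun h : ℝ => q 0 + h • q' 0 + (h ^ 2 / 2) • a₀ h
  have hpos : (fun h => q h - x₁ h) =O[𝓝 0] (· ^ 3) := isBigO_verlet_position_error hg hq hq' ha₀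
  have hqc : Tendsto q (𝓝 0) (𝓝 (q 0)) := hq.self_of_nhds.continuousAt.tendsto
  have hx₁ : Tendsto x₁ (𝓝 0) (𝓝 (q 0)) := by
    simpa using hqc.sub <|
      hpos.trans_tendsto ((continuous_pow 3).tendsto' 0 0 (zero_pow three_ne_zero))
  have hlip : (fun h => g (q h) - g (x₁ h)) =O[𝓝 0] (· ^ 2) :=
    (((hg.contDiffAt.hasStrictFDerivAt two_ne_zero).isBigO_sub.comp_tendsto
      (hqc.prodMk_nhds hx₁)).trans hpos).trans (isLittleO_pow_pow (by norm_num)).isBigO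
  have hcorr := isBigO_pow_div_two_smul (k := 1) ((ha₀.add ha₁).add hlip)
  refine ((isBigO_trapezoid_error_of_newton hg hq hq').sub hcorr).congr_left fun h => ?_
  module

end NewtonSolution

/-- Third-order local error of the linearly-implicit integrator
`a_k = −(I + h² f(x_k))⁻¹ ∇V(x_k)`, `x_{k+1} = x_k + h v_k + ½ h² a_k`,
`v_{k+1} = v_k + ½ h (a_k + a_{k+1})` for the Newtonian dynamics `q'' = −∇V(q)`,
where `V` is `C³` and `f` is a continuous matrix-valued function. -/
theorem stmt_6 (n : ℕ) (V : (Fin n → ℝ) → ℝ) (hV : ContDiff ℝ 3 V)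
    (f : (Fin n → ℝ) → Matrix (Fin n) (Fin n) ℝ) (hf : Continuous f)
    (x₀ v₀ : Fin n → ℝ)
    -- the gradient of V: the vector of partial derivatives
    (gradV : (Fin n → ℝ) → (Fin n → ℝ))
    (hgrad : ∀ y i, gradV y i = fderiv ℝ V y (Pi.single i 1))
    -- q is a solution of q'' = −∇V(q) on a neighborhood (−T, T) of 0,
    -- with derivative q' and initial data (x₀, v₀)
    (T : ℝ) (hT : 0 < T) (q q' : ℝ → (Fin n → ℝ))
    (hq : ∀ t ∈ Set.Ioo (-T) T, HasDerivAt q (q' t) t)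
    (hq' : ∀ t ∈ Set.Ioo (-T) T, HasDerivAt q' (-(gradV (q t))) t)
    (hq0 : q 0 = x₀) (hq'0 : q' 0 = v₀) :
    -- the one-step update of the integrator, as a function of the timestep h
    let a₀ : ℝ → (Fin n → ℝ) := fun h =>
      -(((1 : Matrix (Fin n) (Fin n) ℝ) + h ^ 2 • f x₀)⁻¹.mulVec (gradV x₀))
    let x₁ : ℝ → (Fin n → ℝ) := fun h => x₀ + h • v₀ + (h ^ 2 / 2) • a₀ h
    let a₁ : ℝ → (Fin n → ℝ) := fun h =>
      -(((1 : Matrix (Fin n) (Fin n) ℝ) + h ^ 2 • f (x₁ h))⁻¹.mulVec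
        (gradV (x₁ h)))
    let v₁ : ℝ → (Fin n → ℝ) := fun h => v₀ + (h / 2) • (a₀ h + a₁ h)
    ∃ C > (0 : ℝ), ∃ h₀ > (0 : ℝ), ∀ h : ℝ, 0 < h → h ≤ h₀ →
      IsUnit ((1 : Matrix (Fin n) (Fin n) ℝ) + h ^ 2 • f x₀) ∧
      IsUnit ((1 : Matrix (Fin n) (Fin n) ℝ) + h ^ 2 • f (x₁ h)) ∧
      ‖q h - x₁ h‖ ≤ C * h ^ 3 ∧ ‖q' h - v₁ h‖ ≤ C * h ^ 3 := by
  intro a₀ x₁ a₁ v₁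
  subst hq0 hq'0
  have hg : ContDiff ℝ 2 gradV := contDiff_of_apply_eq_fderiv_single hV (by norm_num) hgrad
  have hnhds : Set.Ioo (-T) T ∈ 𝓝 0 := Ioo_mem_nhds (neg_neg_of_pos hT) hT
  have hqe := eventually_of_mem hnhds hq
  have hq'e := eventually_of_mem hnhds hq'
  have hf₀ : ContinuousAt (fun _ : ℝ => f (q 0)) 0 := continuousAt_const
  have hx₁ : ContinuousAt x₁ 0 := by
    have := continuousAt_inv_one_add_sq_smul hf₀
    fun_prop
  have hfx₁ : ContinuousAt (fun h => f (x₁ h)) 0 := hf.continuousAt.comp hx₁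
  have ha₀ : (fun h => a₀ h + gradV (q 0)) =O[𝓝 0] (· ^ 2) :=
    isBigO_neg_inv_one_add_sq_smul_mulVec_add hf₀ continuousAt_const
  have ha₁ : (fun h => a₁ h + gradV (x₁ h)) =O[𝓝 0] (· ^ 2) :=
    isBigO_neg_inv_one_add_sq_smul_mulVec_add hfx₁ (hg.continuous.continuousAt.comp hx₁)
  -- the product carries the sup norm, so a single constant bounds both errors
  have herr := (isBigO_verlet_position_error hg hqe hq'e ha₀).prod_left
    (isBigO_verlet_velocity_error hg hqe hq'e ha₀ ha₁)
  obtain ⟨C, hC, hbound⟩ := herr.exists_pos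
  obtain ⟨h₀, hh₀, hsmall⟩ := mem_nhdsGT_iff_exists_Ioc_subset.mp <| nhdsWithin_le_nhds <|
    (eventually_isUnit_one_add_sq_smul hf₀).and <|
      (eventually_isUnit_one_add_sq_smul hfx₁).and hbound.bound
  refine ⟨C, hC, h₀, hh₀, fun h hpos hle => ?_⟩
  obtain ⟨hu₀, hu₁, hb⟩ := hsmall ⟨hpos, hle⟩
  rw [norm_pow, Real.norm_of_nonneg hpos.le, Prod.norm_def] at hb
  exact ⟨hu₀, hu₁, (le_max_left _ _).trans hb, (le_max_right _ _).trans hb⟩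
end

section
/- Let f : ℝ → ℝ be continuously differentiable and let h ∈ ℝ. Define the map Φ : ℝ² → ℝ² by Φ(x, v) = (X, V) where X = x + h v + ½ h² f(x) and V = v + ½ h (f(x) + f(X)). Then Φ is everywhere differentiable and the determinant of its Jacobian matrix equals 1 at every point (x, v); i.e., the one-dimensional integrator defined by Φ is area-preserving (symplectic). -/
/-!
Velocity Verlet is the kick–drift–kick splitting: with `k(x, v) = (x, v + ½ h f x)` and
`d(x, v) = (x + h v, v)` one has `Φ = k ∘ d ∘ k`. Each factor is a shear, whose Jacobian is
unitriangular, so by the chain rule and multiplicativity of the determinant the Jacobian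
determinant of `Φ` is `1`.
-/

theorem LinearMap.det_prod_self_eq {R : Type*} [CommRing R] (f : (R × R) →ₗ[R] R × R) :
    LinearMap.det f = (f (1, 0)).1 * (f (0, 1)).2 - (f (0, 1)).1 * (f (1, 0)).2 := by
  rw [← LinearMap.det_toMatrix (Module.Basis.finTwoProd R), Matrix.det_fin_two]
  simp [LinearMap.toMatrix_apply]

section Unimodular

variable (𝕜 : Type*) {E : Type*} [NontriviallyNormedField 𝕜] [NormedAddCommGroup E]
  [NormedSpace 𝕜 E]

def HasUnimodularFDerivAt (φ : E → E) (p : E) : Prop :=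
  ∃ L : E →L[𝕜] E, HasFDerivAt φ L p ∧ LinearMap.det (L : E →ₗ[𝕜] E) = 1

variable {𝕜}

theorem HasUnimodularFDerivAt.comp {ψ φ : E → E} {p : E}
    (hψ : HasUnimodularFDerivAt 𝕜 ψ (φ p)) (hφ : HasUnimodularFDerivAt 𝕜 φ p) :
    HasUnimodularFDerivAt 𝕜 (ψ ∘ φ) p := by
  obtain ⟨M, hM, hMdet⟩ := hψ
  obtain ⟨L, hL, hLdet⟩ := hφ
  refine ⟨M.comp L, hM.comp p hL, ?_⟩
  rw [ContinuousLinearMap.toLinearMap_comp, LinearMap.det_comp, hMdet, hLdet, one_mul]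

end Unimodular

section Shear

variable {𝕜 : Type*} [NontriviallyNormedField 𝕜]

def kick (g : 𝕜 → 𝕜) (p : 𝕜 × 𝕜) : 𝕜 × 𝕜 := (p.1, p.2 + g p.1)

def drift (g : 𝕜 → 𝕜) (p : 𝕜 × 𝕜) : 𝕜 × 𝕜 := (p.1 + g p.2, p.2)

theorem hasUnimodularFDerivAt_kick {g : 𝕜 → 𝕜} {g' : 𝕜} {p : 𝕜 × 𝕜}
    (hg : HasDerivAt g g' p.1) : HasUnimodularFDerivAt 𝕜 (kick g) p := by
  have hfst := hasFDerivAt_fst (𝕜 := 𝕜) (E := 𝕜) (F := 𝕜) (p := p)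
  refine ⟨_, hfst.prodMk (hasFDerivAt_snd.add (hg.comp_hasFDerivAt p hfst)), ?_⟩
  rw [LinearMap.det_prod_self_eq]
  simp

theorem hasUnimodularFDerivAt_drift {g : 𝕜 → 𝕜} {g' : 𝕜} {p : 𝕜 × 𝕜}
    (hg : HasDerivAt g g' p.2) : HasUnimodularFDerivAt 𝕜 (drift g) p := by
  have hsnd := hasFDerivAt_snd (𝕜 := 𝕜) (E := 𝕜) (F := 𝕜) (p := p)
  refine ⟨_, (hasFDerivAt_fst.add (hg.comp_hasFDerivAt p hsnd)).prodMk hsnd, ?_⟩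
  rw [LinearMap.det_prod_self_eq]
  simp

end Shear

/-- The one-step update map `Φ(x, v) = (X, V)`,
`X = x + h v + ½ h² f(x)`, `V = v + ½ h (f(x) + f(X))`, with `f` continuously
differentiable, is everywhere differentiable and its Jacobian determinant is
identically 1: the one-degree-of-freedom integrator is area-preserving
(symplectic). -/
theorem stmt_8 (f : ℝ → ℝ) (hf : ContDiff ℝ 1 f) (h : ℝ) :
    let Φ : ℝ × ℝ → ℝ × ℝ := fun p =>
      (p.1 + h * p.2 + (1 / 2) * h ^ 2 * f p.1,
       p.2 + (1 / 2) * h * (f p.1 + f (p.1 + h * p.2 + (1 / 2) * h ^ 2 * f p.1)))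
    ∀ p : ℝ × ℝ, DifferentiableAt ℝ Φ p ∧
      LinearMap.det ((fderiv ℝ Φ p) : (ℝ × ℝ) →ₗ[ℝ] (ℝ × ℝ)) = 1 := by
  intro Φ p
  let halfKick := kick fun x => (1 / 2) * h * f x
  have hΦ : Φ = halfKick ∘ drift (h * ·) ∘ halfKick := by
    funext q
    have hX : q.1 + h * (q.2 + 1 / 2 * h * f q.1) = q.1 + h * q.2 + 1 / 2 * h ^ 2 * f q.1 := by
      ring
    simp only [Φ, halfKick, kick, drift, Function.comp_apply, hX]
    ext <;> ring
  have hkick (q : ℝ × ℝ) : HasUnimodularFDerivAt ℝ halfKick q :=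
    hasUnimodularFDerivAt_kick
      (((hf.differentiable one_ne_zero q.1).hasDerivAt).const_mul ((1 / 2) * h))
  obtain ⟨L, hL, hdet⟩ := hΦ ▸ (hkick _).comp
    ((hasUnimodularFDerivAt_drift ((hasDerivAt_id _).const_mul h)).comp (hkick p))
  exact ⟨hL.differentiableAt, hL.fderiv ▸ hdet⟩
end

section
/- Let c > 0, ω > 0, T > 0, and let f : [0, T] → ℝ be continuously differentiable with |f(s)| ≤ M₁ and |f'(s)| ≤ M₂ on [0, T]. Let y : [0, T] → ℝ be the twice differentiable solution of y''(t) = f(t) − ω² c² y(t) with y(0) = 0 and y'(0) = 0. Then for every t ∈ [0, T], |y(t)| ≤ (2 M₁ + t M₂)/(ω² c²). In particular, for fixed f, c and bounded t, y(t) = O(ω⁻²) as ω → ∞. -/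
/-!
Write `k = ω²c²` and `z = f - k y`. The energy `F = k y'² + z²` satisfies `F' = 2 z f'`, and
`|z| ≤ √F`, so `F' ≤ 2 M₂ √F`: the square root of the energy grows at rate at most `M₂`.
Since `F 0 = f(0)² ≤ M₁²`, this gives `|z t| ≤ √(F t) ≤ M₁ + M₂ t`, and then
`k |y t| = |f t - z t| ≤ 2 M₁ + M₂ t`.
-/

open Set Filter Topology

section SqrtGrowth

variable {F F' : ℝ → ℝ} {a b A M : ℝ}

/-- The strict comparison theorem needs a barrier that is strictly steeper where it is touched,
hence the slack `ε`. -/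
theorem le_sq_add_mul_of_deriv_le_two_mul_sqrt_of_pos (hA : 0 ≤ A) (hM : 0 ≤ M)
    (hF : ContinuousOn F (Icc a b))
    (hF' : ∀ x ∈ Ico a b, HasDerivWithinAt F (F' x) (Ici x) x)
    (ha : F a ≤ A ^ 2) (hbound : ∀ x ∈ Ico a b, F' x ≤ 2 * M * √(F x))
    {ε : ℝ} (hε : 0 < ε) :
    ∀ x ∈ Icc a b, F x ≤ (A + ε + (M + ε) * (x - a)) ^ 2 := by
  refine image_le_of_deriv_right_lt_deriv_boundary hF hF'
    (B' := fun x => 2 * (M + ε) * (A + ε + (M + ε) * (x - a))) ?_ (fun x => ?_) ?_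
  · simp only [sub_self, mul_zero, add_zero]
    nlinarith
  · refine (((((hasDerivAt_id x).sub_const a).const_mul (M + ε)).const_add (A + ε)).fun_pow
      2).congr_deriv ?_
    simp only [id]
    ring
  · intro x hx hFx
    have hP : 0 < A + ε + (M + ε) * (x - a) := by nlinarith [hx.1]
    calc F' x ≤ 2 * M * √(F x) := hbound x hx
      _ = 2 * M * (A + ε + (M + ε) * (x - a)) := by rw [hFx, Real.sqrt_sq hP.le]
      _ < 2 * (M + ε) * (A + ε + (M + ε) * (x - a)) := by gcongr; linarith

theorem le_sq_add_mul_of_deriv_le_two_mul_sqrt (hA : 0 ≤ A) (hM : 0 ≤ M)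
    (hF : ContinuousOn F (Icc a b))
    (hF' : ∀ x ∈ Ico a b, HasDerivWithinAt F (F' x) (Ici x) x)
    (ha : F a ≤ A ^ 2) (hbound : ∀ x ∈ Ico a b, F' x ≤ 2 * M * √(F x)) :
    ∀ x ∈ Icc a b, F x ≤ (A + M * (x - a)) ^ 2 := by
  intro x hx
  have hlim : Tendsto (fun ε : ℝ => (A + ε + (M + ε) * (x - a)) ^ 2) (𝓝[>] 0)
      (𝓝 ((A + M * (x - a)) ^ 2)) := by
    refine Tendsto.mono_left ?_ nhdsWithin_le_nhds
    have hcont : Continuous fun ε : ℝ => (A + ε + (M + ε) * (x - a)) ^ 2 := by fun_prop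
    convert hcont.tendsto 0 using 2
    ring
  refine ge_of_tendsto hlim ?_
  filter_upwards [self_mem_nhdsWithin] with ε hε using
    le_sq_add_mul_of_deriv_le_two_mul_sqrt_of_pos hA hM hF hF' ha hbound hε x hx

end SqrtGrowth

theorem hasDerivAt_energy {f y y' : ℝ → ℝ} {k s df : ℝ} (hf : HasDerivAt f df s)
    (hy : HasDerivAt y (y' s) s) (hy' : HasDerivAt y' (f s - k * y s) s) :
    HasDerivAt (fun u => k * y' u ^ 2 + (f u - k * y u) ^ 2)
      (2 * (f s - k * y s) * df) s := by
  refine (((hy'.fun_pow 2).const_mul k).add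
    ((hf.fun_sub (hy.const_mul k)).fun_pow 2)).congr_deriv ?_
  ring

theorem two_mul_mul_le_two_mul_mul_sqrt {z w M F : ℝ} (hz : z ^ 2 ≤ F) (hw : |w| ≤ M) :
    2 * z * w ≤ 2 * M * √F :=
  calc 2 * z * w ≤ 2 * (|z| * |w|) := by
        rw [← abs_mul, mul_assoc]; gcongr; exact le_abs_self _
    _ ≤ 2 * (√F * M) := by gcongr; exact Real.abs_le_sqrt hz
    _ = 2 * M * √F := by ring

theorem stmt_16_general (c ω T M₁ M₂ : ℝ) (hc : 0 < c) (hω : 0 < ω)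
    (f f' : ℝ → ℝ)
    (hf : ∀ s ∈ Set.Icc (0 : ℝ) T, HasDerivAt f (f' s) s)
    (hM₁ : ∀ s ∈ Set.Icc (0 : ℝ) T, |f s| ≤ M₁)
    (hM₂ : ∀ s ∈ Set.Icc (0 : ℝ) T, |f' s| ≤ M₂)
    (y y' : ℝ → ℝ)
    (hy : ∀ t ∈ Set.Icc (0 : ℝ) T, HasDerivAt y (y' t) t)
    (hy' : ∀ t ∈ Set.Icc (0 : ℝ) T,
      HasDerivAt y' (f t - ω ^ 2 * c ^ 2 * y t) t)
    (hy0 : y 0 = 0) (hy'0 : y' 0 = 0) :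
    ∀ t ∈ Set.Icc (0 : ℝ) T, |y t| ≤ (2 * M₁ + t * M₂) / (ω ^ 2 * c ^ 2) := by
  intro t ht
  set k := ω ^ 2 * c ^ 2
  have hk : 0 < k := by positivity
  have hsub : Icc 0 t ⊆ Icc 0 T := Icc_subset_Icc_right ht.2
  have h0 : (0 : ℝ) ∈ Icc 0 T := hsub (left_mem_Icc.2 ht.1)
  have hM₁0 : 0 ≤ M₁ := (abs_nonneg _).trans (hM₁ 0 h0)
  have hM₂0 : 0 ≤ M₂ := (abs_nonneg _).trans (hM₂ 0 h0)
  have hE : ∀ s ∈ Icc 0 t, HasDerivAt (fun u => k * y' u ^ 2 + (f u - k * y u) ^ 2)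
      (2 * (f s - k * y s) * f' s) s := fun s hs =>
    hasDerivAt_energy (hf s (hsub hs)) (hy s (hsub hs)) (hy' s (hsub hs))
  have hE0 : k * y' 0 ^ 2 + (f 0 - k * y 0) ^ 2 ≤ M₁ ^ 2 := by
    simpa [hy0, hy'0] using sq_le_sq.2 ((hM₁ 0 h0).trans (le_abs_self M₁))
  have hE' : ∀ s ∈ Ico 0 t, 2 * (f s - k * y s) * f' s
      ≤ 2 * M₂ * √(k * y' s ^ 2 + (f s - k * y s) ^ 2) := fun s hs =>
    two_mul_mul_le_two_mul_mul_sqrt (le_add_of_nonneg_left (by positivity))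
      (hM₂ s (hsub (Ico_subset_Icc_self hs)))
  have hEt := le_sq_add_mul_of_deriv_le_two_mul_sqrt hM₁0 hM₂0
    (fun s hs => (hE s hs).continuousAt.continuousWithinAt)
    (fun s hs => (hE s (Ico_subset_Icc_self hs)).hasDerivWithinAt) hE0 hE'
    t (right_mem_Icc.2 ht.1)
  have hz : |f t - k * y t| ≤ M₁ + M₂ * t :=
    abs_le_of_sq_le_sq (by simpa using (le_add_of_nonneg_left (by positivity)).trans hEt)
      (add_nonneg hM₁0 (mul_nonneg hM₂0 ht.1))
  rw [le_div_iff₀ hk]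
  calc |y t| * k = |f t - (f t - k * y t)| := by
        rw [sub_sub_cancel, abs_mul, abs_of_pos hk, mul_comm]
    _ ≤ |f t| + |f t - k * y t| := abs_sub _ _
    _ ≤ 2 * M₁ + t * M₂ := by linarith [hM₁ t ht]

/-- The fast transverse oscillation has amplitude `O(ω⁻²)`.
For `c, ω, T > 0` and `f` continuously differentiable on `[0, T]` with `|f| ≤ M₁`
and `|f'| ≤ M₂` there, the solution of `y'' = f − ω² c² y`, `y(0) = 0`, `y'(0) = 0`
satisfies `|y(t)| ≤ (2M₁ + t M₂)/(ω² c²)` for every `t ∈ [0, T]`. -/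
theorem stmt_16 (c ω T M₁ M₂ : ℝ) (hc : 0 < c) (hω : 0 < ω) (hT : 0 < T)
    (f f' : ℝ → ℝ)
    (hf : ∀ s ∈ Set.Icc (0 : ℝ) T, HasDerivAt f (f' s) s)
    (hM₁ : ∀ s ∈ Set.Icc (0 : ℝ) T, |f s| ≤ M₁)
    (hM₂ : ∀ s ∈ Set.Icc (0 : ℝ) T, |f' s| ≤ M₂)
    (y y' : ℝ → ℝ)
    (hy : ∀ t ∈ Set.Icc (0 : ℝ) T, HasDerivAt y (y' t) t)
    (hy' : ∀ t ∈ Set.Icc (0 : ℝ) T,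
      HasDerivAt y' (f t - ω ^ 2 * c ^ 2 * y t) t)
    (hy0 : y 0 = 0) (hy'0 : y' 0 = 0) :
    ∀ t ∈ Set.Icc (0 : ℝ) T, |y t| ≤ (2 * M₁ + t * M₂) / (ω ^ 2 * c ^ 2) :=
  stmt_16_general c ω T M₁ M₂ hc hω f f' hf hM₁ hM₂ y y' hy hy' hy0 hy'0
end
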